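/- arXiv:2108.12600 — 5 statements merged into one kernel-verified Lean document; each statement's English description precedes it below -/
import Mathlib

section
/- Let θ₀ ∈ ℝ^d, let K be a positive integer, let π₁,…,π_K be positive weights summing to 1, and for each k let θ*_k = θ₀ + b*_k where b*_k = 0 for k in a set 𝒦₀ and b*_k ≠ 0 for k ∉ 𝒦₀. If Σ_{k∈𝒦₀} π_k > ‖Σ_{k∉𝒦₀} π_k · b*_k/‖b*_k‖‖, then θ₀ is the unique minimizer over θ ∈ ℝ^d of G(θ) = Σ_{k=1}^K π_k ‖θ*_k − θ‖ (Euclidean norm). -/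
open scoped BigOperators
open scoped RealInnerProductSpace

lemma aux_lower {E : Type*} [NormedAddCommGroup E] [InnerProductSpace ℝ E]
    (b v : E) (hb : b ≠ 0) :
    ‖b‖ + ⟪‖b‖⁻¹ • b, v⟫ ≤ ‖b + v‖ := by
  have hb' : (0:ℝ) < ‖b‖ := norm_pos_iff.mpr hb
  have h := real_inner_le_norm (b + v) b
  rw [inner_add_left, real_inner_self_eq_norm_mul_norm] at h
  have hc : ⟪v, b⟫ = ⟪b, v⟫ := (real_inner_comm v b).symm
  rw [hc] at h
  have hs : ⟪‖b‖⁻¹ • b, v⟫ = ‖b‖⁻¹ * ⟪b, v⟫ := real_inner_smul_left _ _ _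
  have hinv : ‖b‖⁻¹ * ‖b‖ = 1 := inv_mul_cancel₀ hb'.ne'
  rw [hs]
  have h4 : ‖b‖⁻¹ * ⟪b, v⟫ ≤ ‖b + v‖ - ‖b‖ := by
    rw [inv_mul_eq_div, div_le_iff₀ hb']
    nlinarith [h]
  linarith

theorem stmt_0 (d K : ℕ) (hK : 0 < K)
    (θ₀ : EuclideanSpace ℝ (Fin d))
    (π : Fin K → ℝ) (hπ : ∀ k, 0 < π k) (hsum : ∑ k, π k = 1)
    (K0 : Finset (Fin K))
    (b : Fin K → EuclideanSpace ℝ (Fin d))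
    (hb0 : ∀ k ∈ K0, b k = 0) (hb1 : ∀ k ∉ K0, b k ≠ 0)
    (θs : Fin K → EuclideanSpace ℝ (Fin d))
    (hθs : ∀ k, θs k = θ₀ + b k)
    (hid : ‖∑ k ∈ K0ᶜ, π k • (‖b k‖⁻¹ • b k)‖ < ∑ k ∈ K0, π k) :
    ∀ θ : EuclideanSpace ℝ (Fin d), θ ≠ θ₀ →
      ∑ k, π k * ‖θs k - θ₀‖ < ∑ k, π k * ‖θs k - θ‖ := by
  intro θ hθ
  set v : EuclideanSpace ℝ (Fin d) := θ₀ - θ with hv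
  have hvne : v ≠ 0 := sub_ne_zero.mpr (Ne.symm hθ)
  have hvpos : (0:ℝ) < ‖v‖ := norm_pos_iff.mpr hvne
  have hA : ∀ k, θs k - θ₀ = b k := by intro k; rw [hθs]; abel
  have hB : ∀ k, θs k - θ = b k + v := by intro k; rw [hθs, hv]; abel
  simp only [hA, hB]
  rw [← Finset.sum_add_sum_compl K0 (fun k => π k * ‖b k‖),
      ← Finset.sum_add_sum_compl K0 (fun k => π k * ‖b k + v‖)]
  have hL : ∑ k ∈ K0, π k * ‖b k‖ = 0 :=
    Finset.sum_eq_zero (fun k hk => by rw [hb0 k hk]; simp)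
  have hR : ∑ k ∈ K0, π k * ‖b k + v‖ = (∑ k ∈ K0, π k) * ‖v‖ := by
    rw [Finset.sum_mul]
    refine Finset.sum_congr rfl (fun k hk => ?_)
    rw [hb0 k hk]; simp
  rw [hL, hR, zero_add]
  set s := ∑ k ∈ K0ᶜ, π k • (‖b k‖⁻¹ • b k) with hsdef
  have hkey : ∑ k ∈ K0ᶜ, π k * ‖b k‖ + ⟪s, v⟫ ≤ ∑ k ∈ K0ᶜ, π k * ‖b k + v‖ := by
    rw [hsdef, sum_inner, ← Finset.sum_add_distrib]
    refine Finset.sum_le_sum (fun k hk => ?_)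
    have h := aux_lower (b k) v (hb1 k (Finset.mem_compl.mp hk))
    have h2 : ⟪π k • (‖b k‖⁻¹ • b k), v⟫ = π k * ⟪‖b k‖⁻¹ • b k, v⟫ :=
      real_inner_smul_left _ _ _
    rw [h2, ← mul_add]
    exact mul_le_mul_of_nonneg_left h (hπ k).le
  have habs : |⟪s, v⟫| ≤ ‖s‖ * ‖v‖ := abs_real_inner_le_norm s v
  have hneg : -(‖s‖ * ‖v‖) ≤ ⟪s, v⟫ := by
    have := neg_abs_le (⟪s, v⟫); linarith
  have hsb : ‖s‖ * ‖v‖ < (∑ k ∈ K0, π k) * ‖v‖ :=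
    mul_lt_mul_of_pos_right hid hvpos
  linarith
end

section
/- Under the setup of the weighted geometric median: for any θ' ≠ θ₀, the directional derivative of G(θ) = Σ_{k∈𝒦₀} π_k‖θ₀ − θ‖ + Σ_{k∉𝒦₀} π_k‖θ₀ + b*_k − θ‖ at the point θ₀ in the direction θ' − θ₀ is bounded below by ‖θ' − θ₀‖ · (Σ_{k∈𝒦₀} π_k − ‖Σ_{k∉𝒦₀} π_k b*_k/‖b*_k‖‖). -/
open scoped BigOperators

open scoped RealInnerProductSpace

lemma aux_hasDerivAt_norm_sub {d : ℕ} (b v : EuclideanSpace ℝ (Fin d)) (hb : b ≠ 0) :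
    HasDerivAt (fun t : ℝ => ‖b - t • v‖) (-(⟪b, v⟫ / ‖b‖)) 0 := by
  have hg : HasDerivAt (fun t : ℝ => ⟪b - t • v, b - t • v⟫)
      (-(2 * ⟪b, v⟫)) 0 := by
    have heq : (fun t : ℝ => ⟪b - t • v, b - t • v⟫) =
        fun t : ℝ => ⟪b, b⟫ - 2 * ⟪b, v⟫ * t + ⟪v, v⟫ * (t * t) := by
      funext t
      rw [inner_sub_sub_self]
      rw [real_inner_smul_left, real_inner_smul_right, real_inner_smul_left,
        real_inner_smul_right, real_inner_comm v b]
      ring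
    rw [heq]
    have h1 : HasDerivAt (fun t : ℝ => ⟪b, b⟫ - 2 * ⟪b, v⟫ * t + ⟪v, v⟫ * (t * t))
        (0 - 2 * ⟪b, v⟫ * 1 + ⟪v, v⟫ * (1 * 0 + 0 * 1)) 0 := by
      exact ((hasDerivAt_const _ _).sub ((hasDerivAt_id 0).const_mul _)).add
        (((hasDerivAt_id 0).mul (hasDerivAt_id 0)).const_mul _)
    simpa using h1
  have hb0 : b - (0:ℝ) • v = b := by simp
  have hg0 : ⟪b - (0:ℝ) • v, b - (0:ℝ) • v⟫ = ‖b‖ ^ 2 := by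
    rw [hb0, real_inner_self_eq_norm_sq]
  have hne : ⟪b - (0:ℝ) • v, b - (0:ℝ) • v⟫ ≠ 0 := by
    rw [hg0]
    exact ne_of_gt (pow_pos (norm_pos_iff.mpr hb) 2)
  have := (Real.hasDerivAt_sqrt hne).comp 0 hg
  have hsq : Real.sqrt (⟪b - (0:ℝ) • v, b - (0:ℝ) • v⟫) = ‖b‖ := by
    rw [hg0, Real.sqrt_sq (norm_nonneg b)]
  have hfun : (Real.sqrt ∘ fun t : ℝ => ⟪b - t • v, b - t • v⟫) =
      fun t : ℝ => ‖b - t • v‖ := by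
    funext t
    simp only [Function.comp]
    rw [real_inner_self_eq_norm_sq, Real.sqrt_sq (norm_nonneg _)]
  rw [hfun] at this
  refine this.congr_deriv ?_
  rw [hsq]
  have hbn : ‖b‖ ≠ 0 := norm_ne_zero_iff.mpr hb
  field_simp

theorem stmt_1 (d K : ℕ)
    (θ₀ : EuclideanSpace ℝ (Fin d))
    (π : Fin K → ℝ) (hπ : ∀ k, 0 < π k)
    (K0 : Finset (Fin K))
    (b : Fin K → EuclideanSpace ℝ (Fin d))
    (hb1 : ∀ k ∉ K0, b k ≠ 0)
    (G : EuclideanSpace ℝ (Fin d) → ℝ)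
    (hG : ∀ θ, G θ = (∑ k ∈ K0, π k * ‖θ₀ - θ‖) + ∑ k ∈ K0ᶜ, π k * ‖θ₀ + b k - θ‖)
    (θ' : EuclideanSpace ℝ (Fin d)) (hθ' : θ' ≠ θ₀)
    (D : ℝ)
    (hD : HasDerivWithinAt (fun t : ℝ => G (θ₀ + t • (θ' - θ₀))) D (Set.Ici 0) 0) :
    ‖θ' - θ₀‖ * ((∑ k ∈ K0, π k) - ‖∑ k ∈ K0ᶜ, π k • (‖b k‖⁻¹ • b k)‖) ≤ D := by
  set v := θ' - θ₀ with hv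
  set S := ∑ k ∈ K0ᶜ, π k • (‖b k‖⁻¹ • b k) with hS
  set E : ℝ := (∑ k ∈ K0, π k) * ‖v‖ + ∑ k ∈ K0ᶜ, π k * (-(⟪b k, v⟫ / ‖b k‖)) with hE
  -- The function equals a nicer function
  have hfun : ∀ t : ℝ, G (θ₀ + t • v) =
      (∑ k ∈ K0, π k * ‖t • v‖) + ∑ k ∈ K0ᶜ, π k * ‖b k - t • v‖ := by
    intro t
    rw [hG]
    congr 1
    · refine Finset.sum_congr rfl fun k _ => ?_
      congr 1
      rw [show θ₀ - (θ₀ + t • v) = -(t • v) by abel, norm_neg]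
    · refine Finset.sum_congr rfl fun k _ => ?_
      congr 1
      congr 1
      abel
  -- First term has derivative within Ici 0
  have h1 : HasDerivWithinAt (fun t : ℝ => ∑ k ∈ K0, π k * ‖t • v‖)
      ((∑ k ∈ K0, π k) * ‖v‖) (Set.Ici 0) 0 := by
    have hlin : HasDerivWithinAt (fun t : ℝ => (∑ k ∈ K0, π k) * (t * ‖v‖))
        ((∑ k ∈ K0, π k) * ‖v‖) (Set.Ici 0) 0 := by
      simpa using (((hasDerivAt_id (0:ℝ)).mul_const ‖v‖).const_mul
        (∑ k ∈ K0, π k)).hasDerivWithinAt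
    refine hlin.congr (fun t ht => ?_) ?_
    · rw [Finset.sum_mul]
      refine Finset.sum_congr rfl fun k _ => ?_
      rw [norm_smul, Real.norm_of_nonneg ht]
    · simp
  -- Second term
  have h2 : HasDerivWithinAt (fun t : ℝ => ∑ k ∈ K0ᶜ, π k * ‖b k - t • v‖)
      (∑ k ∈ K0ᶜ, π k * (-(⟪b k, v⟫ / ‖b k‖))) (Set.Ici 0) 0 := by
    refine HasDerivWithinAt.fun_sum fun k hk => ?_
    have hbk : b k ≠ 0 := hb1 k (Finset.mem_compl.mp hk)
    exact ((aux_hasDerivAt_norm_sub (b k) v hbk).const_mul (π k)).hasDerivWithinAt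
  have hE' : HasDerivWithinAt (fun t : ℝ => G (θ₀ + t • v)) E (Set.Ici 0) 0 := by
    have := h1.add h2
    refine this.congr (fun t _ => (hfun t)) (hfun 0)
  -- uniqueness
  have hDE : D = E :=
    (uniqueDiffOn_Ici 0 0 Set.self_mem_Ici).eq_deriv _ hD hE'
  rw [hDE, hE]
  -- now the inequality
  have hsum : ∑ k ∈ K0ᶜ, π k * (-(⟪b k, v⟫ / ‖b k‖)) = -⟪S, v⟫ := by
    rw [hS, sum_inner, ← Finset.sum_neg_distrib]
    refine Finset.sum_congr rfl fun k _ => ?_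
    rw [real_inner_smul_left, real_inner_smul_left]
    field_simp
  rw [hsum]
  have hcs : ⟪S, v⟫ ≤ ‖S‖ * ‖v‖ := real_inner_le_norm S v
  nlinarith [norm_nonneg v, norm_nonneg S]
end

section
/- Let θ₀ ∈ ℝ^d, weights π_k > 0 with Σπ_k = 1, θ*_k ∈ ℝ^d with θ*_k = θ₀ for k ∈ 𝒦₀ and θ*_k = θ₀ + b*_k (b*_k ≠ 0) otherwise, and set δ = Σ_{k∈𝒦₀} π_k − ‖Σ_{k∉𝒦₀} π_k b*_k/‖b*_k‖‖ > 0. Then for every θ ∈ ℝ^d, G(θ) − G(θ₀) ≥ δ‖θ − θ₀‖, where G(θ) = Σ_{k=1}^K π_k‖θ*_k − θ‖. -/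
open scoped BigOperators

theorem stmt_4 (d K : ℕ)
    (θ₀ : EuclideanSpace ℝ (Fin d))
    (π : Fin K → ℝ) (hπ : ∀ k, 0 < π k) (hsum : ∑ k, π k = 1)
    (K0 : Finset (Fin K))
    (b : Fin K → EuclideanSpace ℝ (Fin d))
    (hb0 : ∀ k ∈ K0, b k = 0) (hb1 : ∀ k ∉ K0, b k ≠ 0)
    (θs : Fin K → EuclideanSpace ℝ (Fin d))
    (hθs : ∀ k, θs k = θ₀ + b k)
    (δ : ℝ)
    (hδdef : δ = (∑ k ∈ K0, π k) - ‖∑ k ∈ K0ᶜ, π k • (‖b k‖⁻¹ • b k)‖)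
    (hδ : 0 < δ) :
    ∀ θ : EuclideanSpace ℝ (Fin d),
      δ * ‖θ - θ₀‖ ≤ (∑ k, π k * ‖θs k - θ‖) - ∑ k, π k * ‖θs k - θ₀‖ := by
  intro θ
  set u : EuclideanSpace ℝ (Fin d) := θ - θ₀ with hu
  set S : EuclideanSpace ℝ (Fin d) := ∑ k ∈ K0ᶜ, π k • (‖b k‖⁻¹ • b k) with hS
  have hsplit : ∀ f : Fin K → ℝ,
      ∑ k, f k = ∑ k ∈ K0, f k + ∑ k ∈ K0ᶜ, f k :=
    fun f => (Finset.sum_add_sum_compl K0 f).symm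
  rw [hsplit, hsplit]
  -- K0 part for θ
  have hA : ∑ k ∈ K0, π k * ‖θs k - θ‖ = (∑ k ∈ K0, π k) * ‖u‖ := by
    rw [Finset.sum_mul]
    refine Finset.sum_congr rfl fun k hk => ?_
    congr 1
    have : θs k - θ = -u := by
      rw [hθs, hb0 k hk, hu]; abel
    rw [this, norm_neg]
  have hA0 : ∑ k ∈ K0, π k * ‖θs k - θ₀‖ = 0 := by
    refine Finset.sum_eq_zero fun k hk => ?_
    have : θs k - θ₀ = 0 := by rw [hθs, hb0 k hk]; abel
    rw [this, norm_zero, mul_zero]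
  -- K0ᶜ part
  have hB0 : ∀ k ∈ K0ᶜ, π k * ‖θs k - θ₀‖ = π k * ‖b k‖ := by
    intro k _
    congr 1
    have : θs k - θ₀ = b k := by rw [hθs]; abel
    rw [this]
  have hterm : ∀ k ∈ K0ᶜ, - inner ℝ (π k • (‖b k‖⁻¹ • b k)) u
      ≤ π k * ‖θs k - θ‖ - π k * ‖b k‖ := by
    intro k hk
    have hbk : b k ≠ 0 := hb1 k (Finset.mem_compl.mp hk)
    have hbn : (0:ℝ) < ‖b k‖ := norm_pos_iff.2 hbk
    have hθ : θs k - θ = b k - u := by rw [hθs, hu]; abel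
    have hin : (inner ℝ (b k - u) (b k) : ℝ) ≤ ‖b k - u‖ * ‖b k‖ :=
      real_inner_le_norm _ _
    have hexp : (inner ℝ (b k - u) (b k) : ℝ) = ‖b k‖^2 - inner ℝ u (b k) := by
      rw [inner_sub_left, real_inner_self_eq_norm_sq]
    have hkey : ‖b k‖ - inner ℝ u (b k) / ‖b k‖ ≤ ‖b k - u‖ := by
      have h3 : ‖b k‖ - ‖b k - u‖ ≤ inner ℝ u (b k) / ‖b k‖ :=
        (le_div_iff₀ hbn).2 (by nlinarith)
      linarith
    have hip : (inner ℝ (π k • (‖b k‖⁻¹ • b k)) u : ℝ)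
        = π k * (‖b k‖⁻¹ * inner ℝ (b k) u) := by
      rw [real_inner_smul_left, real_inner_smul_left]
    rw [hip, hθ, real_inner_comm u (b k)]
    have hπk := (hπ k).le
    have := mul_le_mul_of_nonneg_left hkey hπk
    rw [mul_sub] at this
    have hdiv : inner ℝ u (b k) / ‖b k‖ = ‖b k‖⁻¹ * inner ℝ u (b k) := by
      rw [div_eq_inv_mul]
    rw [hdiv] at this
    linarith
  have hBsum : - inner ℝ S u ≤
      ∑ k ∈ K0ᶜ, π k * ‖θs k - θ‖ - ∑ k ∈ K0ᶜ, π k * ‖θs k - θ₀‖ := by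
    have h1 : ∑ k ∈ K0ᶜ, π k * ‖θs k - θ₀‖ = ∑ k ∈ K0ᶜ, π k * ‖b k‖ :=
      Finset.sum_congr rfl hB0
    rw [h1, ← Finset.sum_sub_distrib]
    have h2 : (inner ℝ S u : ℝ) = ∑ k ∈ K0ᶜ, (inner ℝ (π k • (‖b k‖⁻¹ • b k)) u : ℝ) := by
      rw [hS, sum_inner]
    rw [h2, ← Finset.sum_neg_distrib]
    exact Finset.sum_le_sum hterm
  have hcs : (inner ℝ S u : ℝ) ≤ ‖S‖ * ‖u‖ := real_inner_le_norm _ _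
  have hδ' : δ = (∑ k ∈ K0, π k) - ‖S‖ := hδdef
  nlinarith [norm_nonneg u, norm_nonneg S]
end

section
/- (Deterministic consistency bound.) With δ and G as above, suppose δ > 0. Let θ̃_k ∈ ℝ^d for k = 1,…,K, define G̃(θ) = Σ_{k=1}^K π_k‖θ̃_k − θ‖, and let θ̃ be any minimizer of G̃. Then ‖θ̃ − θ₀‖ ≤ 2δ^{−1} Σ_{k=1}^K π_k‖θ̃_k − θ*_k‖. -/
open scoped BigOperators

theorem stmt_5 (d K : ℕ)
    (θ₀ : EuclideanSpace ℝ (Fin d))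
    (π : Fin K → ℝ) (hπ : ∀ k, 0 < π k) (hsum : ∑ k, π k = 1)
    (K0 : Finset (Fin K))
    (b : Fin K → EuclideanSpace ℝ (Fin d))
    (hb0 : ∀ k ∈ K0, b k = 0) (hb1 : ∀ k ∉ K0, b k ≠ 0)
    (θs : Fin K → EuclideanSpace ℝ (Fin d))
    (hθs : ∀ k, θs k = θ₀ + b k)
    (δ : ℝ)
    (hδdef : δ = (∑ k ∈ K0, π k) - ‖∑ k ∈ K0ᶜ, π k • (‖b k‖⁻¹ • b k)‖)
    (hδ : 0 < δ)
    (θt : Fin K → EuclideanSpace ℝ (Fin d))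
    (θmin : EuclideanSpace ℝ (Fin d))
    (hmin : ∀ θ, ∑ k, π k * ‖θt k - θmin‖ ≤ ∑ k, π k * ‖θt k - θ‖) :
    ‖θmin - θ₀‖ ≤ 2 * δ⁻¹ * ∑ k, π k * ‖θt k - θs k‖ := by
  set v := θmin - θ₀ with hv
  set ε := ∑ k, π k * ‖θt k - θs k‖ with hε
  have hεnn : 0 ≤ ε := Finset.sum_nonneg fun k _ => mul_nonneg (hπ k).le (norm_nonneg _)
  -- Step 1: G(θmin) ≤ G(θ₀) + 2ε
  have a1 : ∑ k, π k * ‖θs k - θmin‖ ≤ (∑ k, π k * ‖θt k - θmin‖) + ε := by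
    rw [hε, ← Finset.sum_add_distrib]
    refine Finset.sum_le_sum fun k _ => ?_
    have h : ‖θs k - θmin‖ ≤ ‖θt k - θmin‖ + ‖θt k - θs k‖ := by
      have heq : θs k - θmin = (θt k - θmin) - (θt k - θs k) := by abel
      rw [heq]; exact norm_sub_le _ _
    nlinarith [(hπ k).le]
  have a3 : ∑ k, π k * ‖θt k - θ₀‖ ≤ (∑ k, π k * ‖θs k - θ₀‖) + ε := by
    rw [hε, ← Finset.sum_add_distrib]
    refine Finset.sum_le_sum fun k _ => ?_
    have h : ‖θt k - θ₀‖ ≤ ‖θs k - θ₀‖ + ‖θt k - θs k‖ := by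
      have heq : θt k - θ₀ = (θt k - θs k) + (θs k - θ₀) := by abel
      rw [heq]
      calc ‖(θt k - θs k) + (θs k - θ₀)‖ ≤ ‖θt k - θs k‖ + ‖θs k - θ₀‖ := norm_add_le _ _
        _ = ‖θs k - θ₀‖ + ‖θt k - θs k‖ := by ring
    nlinarith [(hπ k).le]
  have h1 : ∑ k, π k * ‖θs k - θmin‖ ≤ (∑ k, π k * ‖θs k - θ₀‖) + 2 * ε := by
    have := hmin θ₀
    linarith
  -- Step 2: identification
  have hub : ∀ k ∉ K0, ‖b k‖ - ‖b k - v‖ ≤ (inner ℝ (‖b k‖⁻¹ • b k) v : ℝ) := by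
    intro k hk
    have hbk : ‖b k‖ ≠ 0 := norm_ne_zero_iff.mpr (hb1 k hk)
    have h1 : (inner ℝ (‖b k‖⁻¹ • b k) (b k - v) : ℝ) ≤ ‖b k - v‖ := by
      calc (inner ℝ (‖b k‖⁻¹ • b k) (b k - v) : ℝ) ≤ ‖‖b k‖⁻¹ • b k‖ * ‖b k - v‖ := real_inner_le_norm _ _
        _ = ‖b k - v‖ := by
            rw [norm_smul, norm_inv, norm_norm, inv_mul_cancel₀ hbk, one_mul]
    have h2 : (inner ℝ (‖b k‖⁻¹ • b k) (b k - v) : ℝ) = ‖b k‖ - (inner ℝ (‖b k‖⁻¹ • b k) v : ℝ) := by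
      rw [inner_sub_right, real_inner_smul_left, real_inner_self_eq_norm_mul_norm]
      field_simp
    linarith
  have hS : ∑ k ∈ K0ᶜ, π k * (‖b k‖ - ‖b k - v‖)
      ≤ ‖∑ k ∈ K0ᶜ, π k • (‖b k‖⁻¹ • b k)‖ * ‖v‖ := by
    calc ∑ k ∈ K0ᶜ, π k * (‖b k‖ - ‖b k - v‖)
        ≤ ∑ k ∈ K0ᶜ, π k * (inner ℝ (‖b k‖⁻¹ • b k) v : ℝ) := by
          refine Finset.sum_le_sum fun k hk => ?_
          exact mul_le_mul_of_nonneg_left (hub k (Finset.mem_compl.mp hk)) (hπ k).le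
      _ = (inner ℝ (∑ k ∈ K0ᶜ, π k • (‖b k‖⁻¹ • b k)) v : ℝ) := by
          rw [sum_inner]
          exact Finset.sum_congr rfl fun k _ => (real_inner_smul_left _ _ _).symm
      _ ≤ ‖∑ k ∈ K0ᶜ, π k • (‖b k‖⁻¹ • b k)‖ * ‖v‖ := real_inner_le_norm _ _
  have hG0 : ∑ k, π k * ‖θs k - θ₀‖ = ∑ k ∈ K0ᶜ, π k * ‖b k‖ := by
    rw [← Finset.sum_add_sum_compl K0 (fun k => π k * ‖θs k - θ₀‖)]
    have h0 : ∑ k ∈ K0, π k * ‖θs k - θ₀‖ = 0 :=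
      Finset.sum_eq_zero fun k hk => by rw [hθs, hb0 k hk, add_zero, sub_self, norm_zero, mul_zero]
    rw [h0, zero_add]
    exact Finset.sum_congr rfl fun k _ => by rw [hθs]; congr 1; congr 1; abel
  have hGm : ∑ k, π k * ‖θs k - θmin‖
      = (∑ k ∈ K0, π k) * ‖v‖ + ∑ k ∈ K0ᶜ, π k * ‖b k - v‖ := by
    rw [← Finset.sum_add_sum_compl K0 (fun k => π k * ‖θs k - θmin‖)]
    congr 1
    · rw [Finset.sum_mul]
      refine Finset.sum_congr rfl fun k hk => ?_
      rw [hθs, hb0 k hk, add_zero]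
      congr 1
      rw [hv, norm_sub_rev]
    · refine Finset.sum_congr rfl fun k _ => ?_
      rw [hθs]
      congr 1
      congr 1
      rw [hv]; abel
  have key : δ * ‖v‖ ≤ (∑ k, π k * ‖θs k - θmin‖) - ∑ k, π k * ‖θs k - θ₀‖ := by
    rw [hGm, hG0, hδdef]
    have hsum2 : ∑ k ∈ K0ᶜ, π k * (‖b k‖ - ‖b k - v‖)
        = (∑ k ∈ K0ᶜ, π k * ‖b k‖) - ∑ k ∈ K0ᶜ, π k * ‖b k - v‖ := by
      rw [← Finset.sum_sub_distrib]
      exact Finset.sum_congr rfl fun k _ => by ring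
    have := hS
    rw [hsum2] at this
    nlinarith [norm_nonneg v]
  have hfin : δ * ‖v‖ ≤ 2 * ε := by linarith
  have : ‖v‖ ≤ (2 * ε) / δ := (le_div_iff₀ hδ).mpr (by linarith [mul_comm δ ‖v‖, hfin])
  calc ‖v‖ ≤ (2 * ε) / δ := this
    _ = 2 * δ⁻¹ * ε := by rw [div_eq_mul_inv]; ring
end

section
/- (Equivalence of minimizer sets.) Let ℳ be the set of global minimizers of F(θ, b₁,…,b_K) = L(γ) + Σ_{k=1}^K λ w_k‖b_k‖ where L(γ) = Σ_{k=1}^K (π_k/2)(θ̃_k − θ − b_k)^T Ṽ_k(θ̃_k − θ − b_k), and let ℳ̄ be the set of minimizers of the same objective restricted to the affine set Γ₀ = { γ : b_k = 0 for all k ∈ 𝒦₀ }. If there exists a minimizer γ̄ = (θ̄, b̄₁,…,b̄_K) ∈ ℳ̄ such that π_k‖Ṽ_k(θ̃_k − θ̄)‖ < λ w_k for every k ∈ 𝒦₀, then ℳ = ℳ̄. -/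
set_option maxHeartbeats 1000000
open scoped BigOperators RealInnerProductSpace

theorem small_t_aux (a C : ℝ) (h : ∀ t : ℝ, 0 < t → t ≤ 1 → a ≤ t * C) : a ≤ 0 := by
  by_contra h'
  push_neg at h'
  have h1 := h 1 one_pos le_rfl
  have hC : 0 < C := by nlinarith
  have ht : 0 < a / (2 * C) := by positivity
  have ht1 : a / (2 * C) ≤ 1 := by
    rw [div_le_one (by positivity)]; nlinarith
  have h2 := h _ ht ht1
  rw [div_mul_eq_mul_div] at h2
  have h3 : a * C / (2 * C) = a / 2 := by field_simp
  rw [h3] at h2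
  linarith

theorem stmt_9 (d K : ℕ)
    (θt : Fin K → EuclideanSpace ℝ (Fin d))
    (V : Fin K → EuclideanSpace ℝ (Fin d) →L[ℝ] EuclideanSpace ℝ (Fin d))
    (hVsym : ∀ k x y, ⟪V k x, y⟫ = ⟪x, V k y⟫)
    (hVpsd : ∀ k x, 0 ≤ ⟪x, V k x⟫)
    (π : Fin K → ℝ) (hπ : ∀ k, 0 < π k)
    (lam : ℝ) (hlam : 0 < lam)
    (w : Fin K → ℝ) (hw : ∀ k, 0 < w k)
    (K0 : Finset (Fin K))
    (L : EuclideanSpace ℝ (Fin d) × (Fin K → EuclideanSpace ℝ (Fin d)) → ℝ)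
    (hL : ∀ γ, L γ = ∑ k, π k / 2 * ⟪θt k - γ.1 - γ.2 k, V k (θt k - γ.1 - γ.2 k)⟫)
    (M Mbar : Set (EuclideanSpace ℝ (Fin d) × (Fin K → EuclideanSpace ℝ (Fin d))))
    (hM : M = {γ | ∀ γ', L γ + ∑ k, lam * w k * ‖γ.2 k‖ ≤ L γ' + ∑ k, lam * w k * ‖γ'.2 k‖})
    (hMbar : Mbar = {γ | (∀ k ∈ K0, γ.2 k = 0) ∧
      ∀ γ', (∀ k ∈ K0, γ'.2 k = 0) →
        L γ + ∑ k ∈ K0ᶜ, lam * w k * ‖γ.2 k‖ ≤ L γ' + ∑ k ∈ K0ᶜ, lam * w k * ‖γ'.2 k‖})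
    (hexist : ∃ γbar ∈ Mbar, ∀ k ∈ K0, π k * ‖V k (θt k - γbar.1)‖ < lam * w k) :
    M = Mbar := by
  obtain ⟨γbar, hγbarMbar, hstrict⟩ := hexist
  rw [hMbar] at hγbarMbar
  obtain ⟨hbar0, hbarmin⟩ := hγbarMbar
  set g : Fin K → EuclideanSpace ℝ (Fin d) :=
    fun k => π k • V k (θt k - γbar.1 - γbar.2 k) with hg
  -- expansion of L around γbar
  have hexp : ∀ γ' : EuclideanSpace ℝ (Fin d) × (Fin K → EuclideanSpace ℝ (Fin d)),
      L γ' = L γbar + ∑ k, (π k / 2 *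
          ⟪(γ'.1 - γbar.1) + (γ'.2 k - γbar.2 k), V k ((γ'.1 - γbar.1) + (γ'.2 k - γbar.2 k))⟫
        - ⟪g k, (γ'.1 - γbar.1) + (γ'.2 k - γbar.2 k)⟫) := by
    intro γ'
    rw [hL, hL, ← Finset.sum_add_distrib]
    refine Finset.sum_congr rfl fun k _ => ?_
    set r := θt k - γbar.1 - γbar.2 k with hr
    set δ := (γ'.1 - γbar.1) + (γ'.2 k - γbar.2 k) with hδ
    have hs : θt k - γ'.1 - γ'.2 k = r - δ := by rw [hr, hδ]; abel
    rw [hs, map_sub, inner_sub_left, inner_sub_right, inner_sub_right]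
    have h1 : (⟪r, V k δ⟫ : ℝ) = ⟪V k r, δ⟫ := (hVsym k r δ).symm
    have h2 : (⟪δ, V k r⟫ : ℝ) = ⟪V k r, δ⟫ := real_inner_comm _ _
    have h3 : (⟪g k, δ⟫ : ℝ) = π k * ⟪V k r, δ⟫ := by
      rw [hg]; exact real_inner_smul_left _ _ _
    rw [h1, h2, h3]
    ring
  -- generic perturbation inequality
  have hkey : ∀ (u : EuclideanSpace ℝ (Fin d)) (v : Fin K → EuclideanSpace ℝ (Fin d)),
      (∀ k ∈ K0, v k = 0) → ∀ t : ℝ, 0 < t → t ≤ 1 →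
      0 ≤ t^2 * (∑ k, π k / 2 * ⟪u + v k, V k (u + v k)⟫)
          - t * (∑ k, ⟪g k, u + v k⟫)
          + ((∑ k ∈ K0ᶜ, lam * w k * ‖γbar.2 k + t • v k‖)
            - ∑ k ∈ K0ᶜ, lam * w k * ‖γbar.2 k‖) := by
    intro u v hv t ht ht1
    have hmem : ∀ k ∈ K0, (γbar.1 + t • u, fun k => γbar.2 k + t • v k).2 k = 0 := by
      intro k hk
      simp [hv k hk, hbar0 k hk]
    have h := hbarmin (γbar.1 + t • u, fun k => γbar.2 k + t • v k) hmem
    have hLdiff : L (γbar.1 + t • u, fun k => γbar.2 k + t • v k)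
        = L γbar + (t^2 * ∑ k, π k / 2 * ⟪u + v k, V k (u + v k)⟫
            - t * ∑ k, ⟪g k, u + v k⟫) := by
      rw [hexp]
      congr 1
      rw [Finset.mul_sum, Finset.mul_sum, ← Finset.sum_sub_distrib]
      refine Finset.sum_congr rfl fun k _ => ?_
      have hδ : ((γbar.1 + t • u, fun k => γbar.2 k + t • v k).1 - γbar.1)
          + ((γbar.1 + t • u, fun k => γbar.2 k + t • v k).2 k - γbar.2 k)
          = t • (u + v k) := by
        simp only [smul_add]
        abel
      rw [hδ, map_smul, real_inner_smul_left, real_inner_smul_right, real_inner_smul_right]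
      ring
    rw [hLdiff] at h
    simp only at h
    linarith
  -- KKT: stationarity in θ
  have hG : ∑ k, g k = 0 := by
    set G := ∑ k, g k with hGdef
    have hGle : (⟪G, G⟫ : ℝ) ≤ 0 := by
      apply small_t_aux _ (∑ k, π k / 2 * ⟪G, V k G⟫)
      intro t ht ht1
      have h := hkey G (fun _ => 0) (fun k _ => rfl) t ht ht1
      simp only [add_zero, smul_zero] at h
      have hsum : (∑ k, (⟪g k, G⟫ : ℝ)) = ⟪G, G⟫ := by
        rw [hGdef, sum_inner]
      rw [hsum] at h
      nlinarith
    have : (⟪G, G⟫ : ℝ) = 0 := le_antisymm hGle real_inner_self_nonneg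
    exact inner_self_eq_zero.mp this
  -- per-coordinate perturbation for k ∉ K0
  have hpert : ∀ k, k ∉ K0 → ∀ (v : EuclideanSpace ℝ (Fin d)) (t : ℝ), 0 < t → t ≤ 1 →
      0 ≤ t^2 * (π k / 2 * ⟪v, V k v⟫) - t * ⟪g k, v⟫
        + lam * w k * (‖γbar.2 k + t • v‖ - ‖γbar.2 k‖) := by
    intro k hk v t ht ht1
    have hkc : k ∈ K0ᶜ := Finset.mem_compl.mpr hk
    have h := hkey 0 (fun j => if j = k then v else 0)
      (fun j hj => by simp; intro hjk; exact absurd (hjk ▸ hj) hk) t ht ht1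
    have e1 : (∑ j, π j / 2 * (⟪0 + (if j = k then v else 0),
        V j (0 + (if j = k then v else 0))⟫ : ℝ)) = π k / 2 * ⟪v, V k v⟫ := by
      rw [Finset.sum_eq_single k]
      · simp
      · intro j _ hjk; simp [hjk]
      · simp
    have e2 : (∑ j, (⟪g j, 0 + (if j = k then v else 0)⟫ : ℝ)) = ⟪g k, v⟫ := by
      rw [Finset.sum_eq_single k]
      · simp
      · intro j _ hjk; simp [hjk]
      · simp
    have e3 : (∑ j ∈ K0ᶜ, lam * w j * ‖γbar.2 j + t • (if j = k then v else 0)‖)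
        = (∑ j ∈ K0ᶜ \ {k}, lam * w j * ‖γbar.2 j‖) + lam * w k * ‖γbar.2 k + t • v‖ := by
      rw [Finset.sum_eq_sum_sdiff_singleton_add hkc]
      congr 1
      · refine Finset.sum_congr rfl fun j hj => ?_
        have : j ≠ k := by
          intro hjk; rw [hjk] at hj; simp at hj
        simp [this]
      · simp
    have e4 : (∑ j ∈ K0ᶜ, lam * w j * ‖γbar.2 j‖)
        = (∑ j ∈ K0ᶜ \ {k}, lam * w j * ‖γbar.2 j‖) + lam * w k * ‖γbar.2 k‖ :=
      Finset.sum_eq_sum_sdiff_singleton_add hkc _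
    rw [e1, e2, e3, e4] at h
    nlinarith [h]
  -- KKT: dual feasibility on K0ᶜ (subgradient bound)
  have hv2 : ∀ k, k ∉ K0 → ∀ v : EuclideanSpace ℝ (Fin d), (⟪g k, v⟫ : ℝ) ≤ lam * w k * ‖v‖ := by
    intro k hk v
    have : (⟪g k, v⟫ : ℝ) - lam * w k * ‖v‖ ≤ 0 := by
      apply small_t_aux _ (π k / 2 * ⟪v, V k v⟫)
      intro t ht ht1
      have h := hpert k hk v t ht ht1
      have h1 : ‖γbar.2 k + t • v‖ - ‖γbar.2 k‖ ≤ t * ‖v‖ := by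
        have h2 := norm_add_le (γbar.2 k) (t • v)
        rw [norm_smul, Real.norm_eq_abs, abs_of_pos ht] at h2
        linarith
      have h3 : lam * w k * (‖γbar.2 k + t • v‖ - ‖γbar.2 k‖) ≤ lam * w k * (t * ‖v‖) :=
        mul_le_mul_of_nonneg_left h1 (le_of_lt (mul_pos hlam (hw k)))
      nlinarith
    linarith
  -- norm bound on g, strict on K0
  have hgle : ∀ k, ‖g k‖ ≤ lam * w k := by
    intro k
    by_cases hk : k ∈ K0
    · have hb : γbar.2 k = 0 := hbar0 k hk
      have : ‖g k‖ = π k * ‖V k (θt k - γbar.1)‖ := by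
        rw [hg]
        simp only [hb, sub_zero]
        rw [norm_smul, Real.norm_eq_abs, abs_of_pos (hπ k)]
      rw [this]
      exact le_of_lt (hstrict k hk)
    · rcases eq_or_ne (g k) 0 with h0 | h0
      · rw [h0, norm_zero]; exact le_of_lt (mul_pos hlam (hw k))
      · have h := hv2 k hk (g k)
        rw [real_inner_self_eq_norm_mul_norm] at h
        have hn : 0 < ‖g k‖ := norm_pos_iff.mpr h0
        nlinarith
  have hgstrict : ∀ k ∈ K0, ‖g k‖ < lam * w k := by
    intro k hk
    have hb : γbar.2 k = 0 := hbar0 k hk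
    have : ‖g k‖ = π k * ‖V k (θt k - γbar.1)‖ := by
      rw [hg]
      simp only [hb, sub_zero]
      rw [norm_smul, Real.norm_eq_abs, abs_of_pos (hπ k)]
    rw [this]
    exact hstrict k hk
  -- complementary slackness at γbar
  have heq : ∀ k, (⟪g k, γbar.2 k⟫ : ℝ) = lam * w k * ‖γbar.2 k‖ := by
    intro k
    by_cases hk : k ∈ K0
    · rw [hbar0 k hk]; simp
    · refine le_antisymm ?_ ?_
      · calc (⟪g k, γbar.2 k⟫ : ℝ) ≤ ‖g k‖ * ‖γbar.2 k‖ := real_inner_le_norm _ _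
          _ ≤ lam * w k * ‖γbar.2 k‖ :=
            mul_le_mul_of_nonneg_right (hgle k) (norm_nonneg _)
      · have : lam * w k * ‖γbar.2 k‖ - (⟪g k, γbar.2 k⟫ : ℝ) ≤ 0 := by
          apply small_t_aux _ (π k / 2 * ⟪-γbar.2 k, V k (-γbar.2 k)⟫)
          intro t ht ht1
          have h := hpert k hk (-γbar.2 k) t ht ht1
          have he : γbar.2 k + t • (-γbar.2 k) = (1 - t) • γbar.2 k := by
            rw [smul_neg, sub_smul, one_smul]; abel
          rw [he, norm_smul, Real.norm_eq_abs, abs_of_nonneg (by linarith), inner_neg_right] at h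
          nlinarith
        linarith
  -- the master expansion of the full objective
  have hFexp : ∀ γ' : EuclideanSpace ℝ (Fin d) × (Fin K → EuclideanSpace ℝ (Fin d)),
      L γ' + ∑ k, lam * w k * ‖γ'.2 k‖
      = (L γbar + ∑ k, lam * w k * ‖γbar.2 k‖)
        + (∑ k, π k / 2 *
            ⟪(γ'.1 - γbar.1) + (γ'.2 k - γbar.2 k), V k ((γ'.1 - γbar.1) + (γ'.2 k - γbar.2 k))⟫)
        + ∑ k, (lam * w k * ‖γ'.2 k‖ - ⟪g k, γ'.2 k⟫) := by
    intro γ'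
    rw [hexp γ']
    have hsum : (∑ k, (⟪g k, (γ'.1 - γbar.1) + (γ'.2 k - γbar.2 k)⟫ : ℝ))
        = (∑ k, (⟪g k, γ'.2 k⟫ : ℝ)) - ∑ k, lam * w k * ‖γbar.2 k‖ := by
      simp only [inner_add_right, inner_sub_right, Finset.sum_add_distrib,
        Finset.sum_sub_distrib]
      have ea : (∑ k, (⟪g k, γ'.1⟫ : ℝ)) = 0 := by
        rw [← sum_inner, hG, inner_zero_left]
      have eb : (∑ k, (⟪g k, γbar.1⟫ : ℝ)) = 0 := by
        rw [← sum_inner, hG, inner_zero_left]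
      have ec : (∑ k, (⟪g k, γbar.2 k⟫ : ℝ)) = ∑ k, lam * w k * ‖γbar.2 k‖ :=
        Finset.sum_congr rfl (fun k _ => heq k)
      rw [ea, eb, ec]
      ring
    rw [Finset.sum_sub_distrib, hsum, Finset.sum_sub_distrib]
    ring
  -- nonnegativity facts
  have hQnn : ∀ γ' : EuclideanSpace ℝ (Fin d) × (Fin K → EuclideanSpace ℝ (Fin d)),
      0 ≤ ∑ k, π k / 2 *
        ⟪(γ'.1 - γbar.1) + (γ'.2 k - γbar.2 k), V k ((γ'.1 - γbar.1) + (γ'.2 k - γbar.2 k))⟫ := by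
    intro γ'
    refine Finset.sum_nonneg fun k _ => mul_nonneg (div_nonneg (le_of_lt (hπ k)) (by norm_num)) (hVpsd k _)
  have hSnn : ∀ (γ' : EuclideanSpace ℝ (Fin d) × (Fin K → EuclideanSpace ℝ (Fin d))) (k : Fin K),
      0 ≤ lam * w k * ‖γ'.2 k‖ - ⟪g k, γ'.2 k⟫ := by
    intro γ' k
    have h1 : (⟪g k, γ'.2 k⟫ : ℝ) ≤ ‖g k‖ * ‖γ'.2 k‖ := real_inner_le_norm _ _
    have h2 : ‖g k‖ * ‖γ'.2 k‖ ≤ lam * w k * ‖γ'.2 k‖ :=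
      mul_le_mul_of_nonneg_right (hgle k) (norm_nonneg _)
    linarith
  -- γbar is a global minimizer
  have hFmin : ∀ γ' : EuclideanSpace ℝ (Fin d) × (Fin K → EuclideanSpace ℝ (Fin d)),
      L γbar + ∑ k, lam * w k * ‖γbar.2 k‖ ≤ L γ' + ∑ k, lam * w k * ‖γ'.2 k‖ := by
    intro γ'
    rw [hFexp γ']
    have := hQnn γ'
    have := Finset.sum_nonneg (fun k (_ : k ∈ Finset.univ) => hSnn γ' k)
    linarith
  -- sums over K0ᶜ equal full sums for points in Γ₀
  have hsum0 : ∀ ζ : EuclideanSpace ℝ (Fin d) × (Fin K → EuclideanSpace ℝ (Fin d)),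
      (∀ k ∈ K0, ζ.2 k = 0) →
      (∑ k ∈ K0ᶜ, lam * w k * ‖ζ.2 k‖) = ∑ k, lam * w k * ‖ζ.2 k‖ := by
    intro ζ hζ
    apply Finset.sum_subset (Finset.subset_univ _)
    intro x _ hx
    rw [Finset.mem_compl, not_not] at hx
    rw [hζ x hx, norm_zero, mul_zero]
  -- conclude
  ext γ
  rw [hM, hMbar, Set.mem_setOf_eq, Set.mem_setOf_eq]
  constructor
  · intro hγ
    have hFeq : L γ + ∑ k, lam * w k * ‖γ.2 k‖
        = L γbar + ∑ k, lam * w k * ‖γbar.2 k‖ :=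
      le_antisymm (hγ γbar) (hFmin γ)
    have hzero : (∑ k, π k / 2 *
        ⟪(γ.1 - γbar.1) + (γ.2 k - γbar.2 k), V k ((γ.1 - γbar.1) + (γ.2 k - γbar.2 k))⟫)
        + ∑ k, (lam * w k * ‖γ.2 k‖ - ⟪g k, γ.2 k⟫) = 0 := by
      have := hFexp γ
      rw [hFeq] at this
      linarith
    have hS0 : ∑ k, (lam * w k * ‖γ.2 k‖ - (⟪g k, γ.2 k⟫ : ℝ)) = 0 := by
      have h1 := hQnn γ
      have h2 := Finset.sum_nonneg (fun k (_ : k ∈ Finset.univ) => hSnn γ k)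
      linarith
    have hterm0 : ∀ k, lam * w k * ‖γ.2 k‖ - (⟪g k, γ.2 k⟫ : ℝ) = 0 := by
      intro k
      have := (Finset.sum_eq_zero_iff_of_nonneg
        (fun k (_ : k ∈ Finset.univ) => hSnn γ k)).mp hS0 k (Finset.mem_univ k)
      exact this
    have hb0' : ∀ k ∈ K0, γ.2 k = 0 := by
      intro k hk
      have h1 := hterm0 k
      have h2 : (⟪g k, γ.2 k⟫ : ℝ) ≤ ‖g k‖ * ‖γ.2 k‖ := real_inner_le_norm _ _
      have h3 := hgstrict k hk
      have h4 : ‖γ.2 k‖ = 0 := by nlinarith [norm_nonneg (γ.2 k)]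
      exact norm_eq_zero.mp h4
    refine ⟨hb0', fun γ' hγ' => ?_⟩
    rw [hsum0 γ hb0', hsum0 γ' hγ']
    exact hγ γ'
  · rintro ⟨hb0, hmin⟩ γ'
    have hReq : L γ + ∑ k ∈ K0ᶜ, lam * w k * ‖γ.2 k‖
        = L γbar + ∑ k ∈ K0ᶜ, lam * w k * ‖γbar.2 k‖ :=
      le_antisymm (hmin γbar hbar0) (hbarmin γ hb0)
    rw [hsum0 γ hb0, hsum0 γbar hbar0] at hReq
    rw [hReq]
    exact hFmin γ'
end
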